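/- Let (α, β) be a Mannheim couple in which λ is constant, λ·κ(s)·(1 + H(s)²) = 1 on I, H(s) > 0 and H′(s) > 0 on I, and B_β(φ(s)) = N(s) for all s ∈ I. Then (τ_β/κ_β)(φ(s)) = κ(s)·(1 + H(s)²)^{3/2}/H′(s) = σ_N(s) for all s ∈ I. Consequently, σ_N is constant on I (i.e. α is a slant helix) if and only if τ_β/κ_β is constant on φ(I) (i.e. the Mannheim partner β is a general helix). -/

import Mathlib

open Real RealInnerProductSpace

noncomputable section

/-- Euclidean 3-space. -/
abbrev E3 := EuclideanSpace ℝ (Fin 3)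

/-- Cross product on `E3 = EuclideanSpace ℝ (Fin 3)`. -/
def cross3 (x y : E3) : E3 :=
  (EuclideanSpace.equiv (Fin 3) ℝ).symm
    (crossProduct ((EuclideanSpace.equiv (Fin 3) ℝ) x) ((EuclideanSpace.equiv (Fin 3) ℝ) y))

/-- A unit-speed curve `α : I → E³` together with its Frenet apparatus `(T, N, B, κ, τ)`:
`T = α′`, `κ = ‖T′‖ > 0`, `N = T′/κ`, `B = T × N`, and the Frenet equations
`T′ = κN`, `N′ = −κT + τB`, `B′ = −τN` hold on `I`. -/
structure FrenetCurve (I : Set ℝ) where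
  α : ℝ → E3
  T : ℝ → E3
  N : ℝ → E3
  B : ℝ → E3
  κ : ℝ → ℝ
  τ : ℝ → ℝ
  smooth_α : ContDiffOn ℝ (⊤ : ℕ∞) α I
  smooth_T : ContDiffOn ℝ (⊤ : ℕ∞) T I
  smooth_N : ContDiffOn ℝ (⊤ : ℕ∞) N I
  smooth_B : ContDiffOn ℝ (⊤ : ℕ∞) B I
  smooth_κ : ContDiffOn ℝ (⊤ : ℕ∞) κ I
  smooth_τ : ContDiffOn ℝ (⊤ : ℕ∞) τ I
  /-- `T = α′` -/
  deriv_α : ∀ s ∈ I, HasDerivAt α (T s) s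
  /-- unit speed -/
  unit_T : ∀ s ∈ I, ‖T s‖ = 1
  /-- `N` is a unit vector (together with `frenet_T` this says `N = T′/κ`) -/
  unit_N : ∀ s ∈ I, ‖N s‖ = 1
  /-- `κ = ‖T′‖ > 0` -/
  κ_pos : ∀ s ∈ I, 0 < κ s
  /-- Frenet equation `T′ = κ N` -/
  frenet_T : ∀ s ∈ I, HasDerivAt T (κ s • N s) s
  /-- Frenet equation `N′ = −κ T + τ B` -/
  frenet_N : ∀ s ∈ I, HasDerivAt N (-(κ s) • T s + τ s • B s) s
  /-- Frenet equation `B′ = −τ N` -/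
  frenet_B : ∀ s ∈ I, HasDerivAt B (-(τ s) • N s) s
  /-- `B = T × N` -/
  B_def : ∀ s ∈ I, B s = cross3 (T s) (N s)

/-- The harmonic curvature function `H = τ/κ` (Abelian case, where `τ_G = 0`). -/
def FrenetCurve.H {I : Set ℝ} (c : FrenetCurve I) : ℝ → ℝ := fun s => c.τ s / c.κ s

/-- A Mannheim couple `(α, β)`: there are a smooth function `λ = lam : I → ℝ` and a smooth
reparametrization `φ : I → J` with `φ′ = dφ > 0` such that `β (φ s) = α s + lam s • N s` on `I`,
and the principal normal `N` of `α` is parallel to (a scalar multiple of) the binormal `B_β` of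
`β` at corresponding points. -/
structure MannheimCouple (I J : Set ℝ) (a : FrenetCurve I) (b : FrenetCurve J) where
  lam : ℝ → ℝ
  φ : ℝ → ℝ
  /-- the derivative of `φ` -/
  dφ : ℝ → ℝ
  smooth_lam : ContDiffOn ℝ (⊤ : ℕ∞) lam I
  smooth_φ : ContDiffOn ℝ (⊤ : ℕ∞) φ I
  deriv_φ : ∀ s ∈ I, HasDerivAt φ (dφ s) s
  dφ_pos : ∀ s ∈ I, 0 < dφ s
  maps : ∀ s ∈ I, φ s ∈ J
  couple : ∀ s ∈ I, b.α (φ s) = a.α s + lam s • a.N s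
  parallel : ∀ s ∈ I, ∃ c : ℝ, a.N s = c • b.B (φ s)


/-- Inner product on `E3` as a dot product. -/
lemma real_inner_eq_dot3 (x y : E3) :
    ⟪x, y⟫ = dotProduct ((EuclideanSpace.equiv (Fin 3) ℝ) x)
      ((EuclideanSpace.equiv (Fin 3) ℝ) y) := by
  simp [PiLp.inner_apply, dotProduct, RCLike.inner_apply, mul_comm]

lemma equiv_cross3 (x y : E3) :
    (EuclideanSpace.equiv (Fin 3) ℝ) (cross3 x y)
      = crossProduct ((EuclideanSpace.equiv (Fin 3) ℝ) x) ((EuclideanSpace.equiv (Fin 3) ℝ) y) := by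
  rfl

lemma inner_cross3_left (x y : E3) : ⟪x, cross3 x y⟫ = 0 := by
  rw [real_inner_eq_dot3, equiv_cross3]
  exact dot_self_cross _ _

lemma inner_cross3_self (x y : E3) :
    ⟪cross3 x y, cross3 x y⟫ = ⟪x, x⟫ * ⟪y, y⟫ - ⟪x, y⟫ * ⟪y, x⟫ := by
  rw [real_inner_eq_dot3, real_inner_eq_dot3, real_inner_eq_dot3, real_inner_eq_dot3,
    real_inner_eq_dot3, equiv_cross3]
  exact cross_dot_cross _ _ _ _

/-- For a Mannheim couple with constant `λ = l`, `l·κ·(1 + H²) = 1`, `H > 0` and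
`H′ > 0` on `I`, and `B_β (φ s) = N s`, one has
`(τ_β/κ_β)(φ s) = κ·(1 + H²)^{3/2}/H′ = σ_N` on `I`. Consequently `σ_N` is constant on `I`
(`α` is a slant helix) iff `τ_β/κ_β` is constant at corresponding points (`β` is a general
helix). -/
theorem mannheim_slant_helix_iff_partner_general_helix
    (I J : Set ℝ) (hI : IsOpen I) (hJ : IsOpen J)
    (a : FrenetCurve I) (b : FrenetCurve J) (M : MannheimCouple I J a b)
    (l : ℝ) (hlam : ∀ s ∈ I, M.lam s = l)
    (hrel : ∀ s ∈ I, l * a.κ s * (1 + a.H s ^ 2) = 1)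
    (hH : ∀ s ∈ I, 0 < a.H s) (hH' : ∀ s ∈ I, 0 < deriv a.H s)
    (hB : ∀ s ∈ I, b.B (M.φ s) = a.N s) :
    (∀ s ∈ I, b.τ (M.φ s) / b.κ (M.φ s)
        = a.κ s * Real.sqrt (1 + a.H s ^ 2) ^ 3 / deriv a.H s) ∧
    ((∃ c : ℝ, ∀ s ∈ I, a.κ s * Real.sqrt (1 + a.H s ^ 2) ^ 3 / deriv a.H s = c) ↔
      (∃ c : ℝ, ∀ s ∈ I, b.τ (M.φ s) / b.κ (M.φ s) = c)) := by
  classical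
  -- basic facts
  have hτeq : ∀ s ∈ I, a.τ s = a.κ s * a.H s := by
    intro s hs
    have hκ := (a.κ_pos s hs).ne'
    rw [FrenetCurve.H]
    field_simp
  have hTN : ∀ s ∈ I, ⟪a.T s, a.N s⟫ = 0 := by
    intro s hs
    have hder : HasDerivAt (fun u => ⟪a.T u, a.T u⟫)
        (⟪a.T s, a.κ s • a.N s⟫ + ⟪a.κ s • a.N s, a.T s⟫) s :=
      HasDerivAt.inner (𝕜 := ℝ) (a.frenet_T s hs) (a.frenet_T s hs)
    have hconst : (fun u => ⟪a.T u, a.T u⟫) =ᶠ[nhds s] (fun _ => (1 : ℝ)) :=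
      Filter.eventuallyEq_of_mem (hI.mem_nhds hs) (fun u hu => by
        rw [real_inner_self_eq_norm_sq, a.unit_T u hu]; norm_num)
    have h0 : HasDerivAt (fun u => ⟪a.T u, a.T u⟫) 0 s :=
      (hasDerivAt_const s (1 : ℝ)).congr_of_eventuallyEq hconst
    have h2 := hder.unique h0
    rw [real_inner_smul_left, real_inner_smul_right] at h2
    rw [real_inner_comm (a.T s)] at h2
    have h3 : a.κ s * ⟪a.T s, a.N s⟫ = 0 := by linarith
    exact (mul_eq_zero.1 h3).resolve_left (a.κ_pos s hs).ne'
  have hTB : ∀ s ∈ I, ⟪a.T s, a.B s⟫ = 0 := fun s hs => by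
    rw [a.B_def s hs]; exact inner_cross3_left _ _
  have hBnorm : ∀ s ∈ I, ‖a.B s‖ = 1 := by
    intro s hs
    have h1 : ⟪a.B s, a.B s⟫ = 1 := by
      rw [a.B_def s hs, inner_cross3_self, real_inner_self_eq_norm_sq,
        real_inner_self_eq_norm_sq, a.unit_T s hs, a.unit_N s hs, hTN s hs,
        real_inner_comm, hTN s hs]
      norm_num
    rw [norm_eq_sqrt_real_inner, h1, Real.sqrt_one]
  -- The tangent of β at corresponding points
  have hTb : ∀ s ∈ I, b.T (M.φ s)
      = (Real.sqrt (1 + a.H s ^ 2))⁻¹ • (a.H s • a.T s + a.B s) := by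
    intro s hs
    have ht : M.φ s ∈ J := M.maps s hs
    have hκ := a.κ_pos s hs
    have hHp := hH s hs
    have hτp : 0 < a.τ s := by rw [hτeq s hs]; positivity
    have hrel1 := hrel s hs
    have hposk : 0 < a.κ s * (1 + a.H s ^ 2) := by positivity
    have hlp : 0 < l := by nlinarith [hposk]
    have hdp := M.dφ_pos s hs
    set r := Real.sqrt (1 + a.H s ^ 2) with hr
    have hr2 : r ^ 2 = 1 + a.H s ^ 2 := Real.sq_sqrt (by positivity)
    have hrp : 0 < r := Real.sqrt_pos.2 (by positivity)
    have hcomp : HasDerivAt (fun u => b.α (M.φ u)) (M.dφ s • b.T (M.φ s)) s :=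
      (b.deriv_α (M.φ s) ht).scomp s (M.deriv_φ s hs)
    have heq : (fun u => b.α (M.φ u)) =ᶠ[nhds s] (fun u => a.α u + l • a.N u) :=
      Filter.eventuallyEq_of_mem (hI.mem_nhds hs) (fun u hu => by
        rw [M.couple u hu, hlam u hu])
    have hrhs : HasDerivAt (fun u => a.α u + l • a.N u)
        (a.T s + l • (-(a.κ s) • a.T s + a.τ s • a.B s)) s :=
      (a.deriv_α s hs).add ((a.frenet_N s hs).const_smul l)
    have hlhs : HasDerivAt (fun u => a.α u + l • a.N u) (M.dφ s • b.T (M.φ s)) s :=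
      hcomp.congr_of_eventuallyEq heq.symm
    have huniq : M.dφ s • b.T (M.φ s)
        = a.T s + l • (-(a.κ s) • a.T s + a.τ s • a.B s) := hlhs.unique hrhs
    have h1 : 1 - l * a.κ s = l * a.τ s * a.H s := by
      rw [hτeq s hs]; nlinarith
    have hcoef : a.T s + l • (-(a.κ s) • a.T s + a.τ s • a.B s)
        = (l * a.τ s) • (a.H s • a.T s + a.B s) := by
      match_scalars
      · linarith
      · ring
    have huniq' : M.dφ s • b.T (M.φ s) = (l * a.τ s) • (a.H s • a.T s + a.B s) :=
      huniq.trans hcoef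
    have hwnorm : ‖a.H s • a.T s + a.B s‖ = r := by
      have h2 : ‖a.H s • a.T s + a.B s‖ ^ 2 = 1 + a.H s ^ 2 := by
        rw [norm_add_sq_real, norm_smul, real_inner_smul_left, hTB s hs, a.unit_T s hs,
          hBnorm s hs, Real.norm_eq_abs]
        rw [abs_of_pos hHp]; ring
      rw [← Real.sqrt_sq (norm_nonneg _), h2]
    have hd_eq : M.dφ s = l * a.τ s * r := by
      have hn := congrArg norm huniq'
      rw [norm_smul, norm_smul, b.unit_T (M.φ s) ht, hwnorm, Real.norm_eq_abs,
        Real.norm_eq_abs, abs_of_pos hdp, abs_of_pos (by positivity : (0:ℝ) < l * a.τ s)] at hn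
      simpa using hn
    have hfin : M.dφ s • b.T (M.φ s)
        = M.dφ s • ((Real.sqrt (1 + a.H s ^ 2))⁻¹ • (a.H s • a.T s + a.B s)) := by
      rw [huniq', smul_smul, hd_eq, ← hr]
      congr 1
      field_simp
    exact smul_right_injective E3 hdp.ne' hfin
  -- the key pointwise identity
  have key : ∀ s ∈ I, b.τ (M.φ s) / b.κ (M.φ s)
      = a.κ s * Real.sqrt (1 + a.H s ^ 2) ^ 3 / deriv a.H s := by
    intro s hs
    have ht : M.φ s ∈ J := M.maps s hs
    have hκ := a.κ_pos s hs
    have hHp := hH s hs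
    have hdp := M.dφ_pos s hs
    have hh'p := hH' s hs
    have hκb := b.κ_pos (M.φ s) ht
    set r := Real.sqrt (1 + a.H s ^ 2) with hr
    have hr2 : r ^ 2 = 1 + a.H s ^ 2 := Real.sq_sqrt (by positivity)
    have hrp : 0 < r := Real.sqrt_pos.2 (by positivity)
    -- E1 : differentiate B_β ∘ φ = N
    have hcompB : HasDerivAt (fun u => b.B (M.φ u)) (M.dφ s • (-(b.τ (M.φ s)) • b.N (M.φ s))) s :=
      (b.frenet_B (M.φ s) ht).scomp s (M.deriv_φ s hs)
    have heqB : (fun u => b.B (M.φ u)) =ᶠ[nhds s] a.N :=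
      Filter.eventuallyEq_of_mem (hI.mem_nhds hs) (fun u hu => hB u hu)
    have hNd : HasDerivAt a.N (M.dφ s • (-(b.τ (M.φ s)) • b.N (M.φ s))) s :=
      hcompB.congr_of_eventuallyEq heqB.symm
    have hE1 : M.dφ s • (-(b.τ (M.φ s)) • b.N (M.φ s))
        = -(a.κ s) • a.T s + a.τ s • a.B s := hNd.unique (a.frenet_N s hs)
    -- derivative of H
    have hHdiff : DifferentiableAt ℝ a.H s := by
      have hκd : DifferentiableAt ℝ a.κ s :=
        ((a.smooth_κ.contDiffAt (hI.mem_nhds hs)).differentiableAt (by simp))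
      have hτd : DifferentiableAt ℝ a.τ s :=
        ((a.smooth_τ.contDiffAt (hI.mem_nhds hs)).differentiableAt (by simp))
      exact hτd.div hκd hκ.ne'
    have hHd : HasDerivAt a.H (deriv a.H s) s := hHdiff.hasDerivAt
    -- E2 : differentiate T_β ∘ φ
    have hcompT : HasDerivAt (fun u => b.T (M.φ u)) (M.dφ s • (b.κ (M.φ s) • b.N (M.φ s))) s :=
      (b.frenet_T (M.φ s) ht).scomp s (M.deriv_φ s hs)
    have hsq : HasDerivAt (fun u => 1 + a.H u ^ 2) (2 * a.H s * deriv a.H s) s := by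
      have h := (hasDerivAt_const s (1 : ℝ)).fun_add (hHd.fun_pow 2)
      simpa [mul_comm, mul_assoc, mul_left_comm] using h
    have hsqrt : HasDerivAt (fun u => Real.sqrt (1 + a.H u ^ 2))
        (2 * a.H s * deriv a.H s / (2 * r)) s := hsq.sqrt (by positivity)
    have hinv : HasDerivAt (fun u => (Real.sqrt (1 + a.H u ^ 2))⁻¹)
        (-(2 * a.H s * deriv a.H s / (2 * r)) / r ^ 2) s := by
      exact hsqrt.inv hrp.ne'
    have hw : HasDerivAt (fun u => a.H u • a.T u + a.B u)
        ((a.H s • (a.κ s • a.N s) + deriv a.H s • a.T s) + -(a.τ s) • a.N s) s :=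
      (hHd.smul (a.frenet_T s hs)).add (a.frenet_B s hs)
    have hg : HasDerivAt (fun u => (Real.sqrt (1 + a.H u ^ 2))⁻¹ • (a.H u • a.T u + a.B u))
        (r⁻¹ • ((a.H s • (a.κ s • a.N s) + deriv a.H s • a.T s) + -(a.τ s) • a.N s)
          + (-(2 * a.H s * deriv a.H s / (2 * r)) / r ^ 2) • (a.H s • a.T s + a.B s)) s := by
      exact hinv.smul hw
    have heqT : (fun u => b.T (M.φ u)) =ᶠ[nhds s]
        (fun u => (Real.sqrt (1 + a.H u ^ 2))⁻¹ • (a.H u • a.T u + a.B u)) :=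
      Filter.eventuallyEq_of_mem (hI.mem_nhds hs) (fun u hu => hTb u hu)
    have hTd : HasDerivAt (fun u => b.T (M.φ u))
        (r⁻¹ • ((a.H s • (a.κ s • a.N s) + deriv a.H s • a.T s) + -(a.τ s) • a.N s)
          + (-(2 * a.H s * deriv a.H s / (2 * r)) / r ^ 2) • (a.H s • a.T s + a.B s)) s :=
      hg.congr_of_eventuallyEq heqT
    have hE2 : M.dφ s • (b.κ (M.φ s) • b.N (M.φ s))
        = r⁻¹ • ((a.H s • (a.κ s • a.N s) + deriv a.H s • a.T s) + -(a.τ s) • a.N s)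
          + (-(2 * a.H s * deriv a.H s / (2 * r)) / r ^ 2) • (a.H s • a.T s + a.B s) :=
      hcompT.unique hTd
    -- extract scalars
    have hτs : a.τ s = a.κ s * a.H s := hτeq s hs
    have hkey : (a.κ s * (M.dφ s * b.κ (M.φ s))) • b.N (M.φ s)
        = (deriv a.H s / r ^ 3 * (M.dφ s * b.τ (M.φ s))) • b.N (M.φ s) := by
      have hE1' : (M.dφ s * b.τ (M.φ s)) • b.N (M.φ s) = a.κ s • a.T s - a.τ s • a.B s := by
        have h := hE1
        rw [smul_smul, mul_neg, neg_smul, neg_eq_iff_eq_neg] at h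
        rw [h]; module
      have hE2' : (M.dφ s * b.κ (M.φ s)) • b.N (M.φ s)
          = r⁻¹ • ((a.H s • (a.κ s • a.N s) + deriv a.H s • a.T s) + -(a.τ s) • a.N s)
            + (-(2 * a.H s * deriv a.H s / (2 * r)) / r ^ 2) • (a.H s • a.T s + a.B s) := by
        rw [← smul_smul]; exact hE2
      rw [mul_smul, hE2', mul_smul, hE1', hτs]
      match_scalars
      · field_simp
        ring
      · field_simp
        linear_combination hr2
      · field_simp
    have hNb : b.N (M.φ s) ≠ 0 := by
      intro h0
      have h1 := b.unit_N (M.φ s) ht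
      rw [h0, norm_zero] at h1
      norm_num at h1
    have hscal : a.κ s * (M.dφ s * b.κ (M.φ s))
        = deriv a.H s / r ^ 3 * (M.dφ s * b.τ (M.φ s)) :=
      smul_left_injective ℝ hNb hkey
    have h3 : a.κ s * (M.dφ s * b.κ (M.φ s)) * r ^ 3
        = deriv a.H s * (M.dφ s * b.τ (M.φ s)) := by
      rw [hscal]; field_simp
    have h4 : b.τ (M.φ s) * deriv a.H s = a.κ s * r ^ 3 * b.κ (M.φ s) := by
      apply mul_left_cancel₀ hdp.ne'
      linear_combination -h3
    rw [div_eq_div_iff hκb.ne' hh'p.ne']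
    linear_combination h4
  refine ⟨key, ?_, ?_⟩
  · rintro ⟨c, hc⟩
    exact ⟨c, fun s hs => (key s hs).trans (hc s hs)⟩
  · rintro ⟨c, hc⟩
    exact ⟨c, fun s hs => ((key s hs).symm.trans (hc s hs))⟩
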